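/- arXiv:2305.06117 — 6 statements merged into one kernel-verified Lean document; each statement's English description precedes it below -/
import Mathlib

section
/- In the polynomial ring F_q[x,y] one has the identity f_R(x,y)^p − f_R(x,y) = −x^{p^e}·E_R(y) + x·R(y) + y·R(x). -/
/-!
Write `P = p₀ ^ n`. The Artin–Schreier map `℘(u) = u ^ P - u` is additive, and on a Frobenius
orbit sum it telescopes: `℘(∑_{j<m} u ^ P ^ j) = u ^ P ^ m - u`. Applying `℘` to `f_R` term by
term therefore leaves `-∑_{i<e} ((a_i x^{P^i} y)^{P^{e-i}} - a_i x^{P^i} y) - ((x R(y))^{P^e} - x R(y))`,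
and since `(a_i x^{P^i} y)^{P^{e-i}} = x^{P^e} (a_i y)^{P^{e-i}}` this is the right-hand side,
the `i = e` terms of `E_R(y)` and of `y R(x)` cancelling.
-/

open Finset Polynomial

/-- The additive polynomial `R(x) = ∑_{i=0}^e a_i x^{p^i}`, evaluated in any commutative ring. -/
def Rgen {A : Type*} [CommRing A] (p e : ℕ) (a : ℕ → A) (x : A) : A :=
  ∑ i ∈ Finset.range (e + 1), a i * x ^ p ^ i

/-- `E_R(x) = R(x)^{p^e} + ∑_{i=0}^e (a_i x)^{p^{e-i}}`. -/
def Egen {A : Type*} [CommRing A] (p e : ℕ) (a : ℕ → A) (x : A) : A :=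
  Rgen p e a x ^ p ^ e + ∑ i ∈ Finset.range (e + 1), (a i * x) ^ p ^ (e - i)

/-- `f_R(x,y) = -∑_{i=0}^{e-1} ( ∑_{j=0}^{e-i-1} (a_i x^{p^i} y)^{p^j} + (x R(y))^{p^i} )`. -/
def fgen {A : Type*} [CommRing A] (p e : ℕ) (a : ℕ → A) (x y : A) : A :=
  -∑ i ∈ Finset.range e,
    ((∑ j ∈ Finset.range (e - i), (a i * x ^ p ^ i * y) ^ p ^ j) + (x * Rgen p e a y) ^ p ^ i)

/-- The set `H_R = {(a,b) : E_R(a) = 0, b^p - b = a R(a)}`. -/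
def Hset {K : Type*} [CommRing K] (p e : ℕ) (a : ℕ → K) : Set (K × K) :=
  {h | Egen p e a h.1 = 0 ∧ h.2 ^ p - h.2 = h.1 * Rgen p e a h.1}

/-- The group law `(a,b)·(a',b') = (a+a', b+b'+f_R(a,a'))` on `H_R`. -/
def Hmul {K : Type*} [CommRing K] (p e : ℕ) (a : ℕ → K) (h h' : K × K) : K × K :=
  (h.1 + h'.1, h.2 + h'.2 + fgen p e a h.1 h'.1)

section ArtinSchreier

variable {A : Type*} [CommRing A] (p₀ n : ℕ) [ExpChar A p₀]

def artinSchreier : A →+ A :=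
  (iterateFrobenius A p₀ n).toAddMonoidHom - AddMonoidHom.id A

theorem artinSchreier_apply (u : A) : artinSchreier p₀ n u = u ^ p₀ ^ n - u :=
  congrArg (· - u) (iterateFrobenius_def p₀ n u)

theorem artinSchreier_pow_pow (u : A) (j : ℕ) :
    artinSchreier p₀ n (u ^ (p₀ ^ n) ^ j) = u ^ (p₀ ^ n) ^ (j + 1) - u ^ (p₀ ^ n) ^ j := by
  rw [artinSchreier_apply, ← pow_mul, ← pow_succ]

theorem artinSchreier_sum_range_pow_pow (u : A) (m : ℕ) :
    artinSchreier p₀ n (∑ j ∈ range m, u ^ (p₀ ^ n) ^ j) = u ^ (p₀ ^ n) ^ m - u := by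
  simp only [map_sum, artinSchreier_pow_pow]
  rw [sum_range_sub (fun j => u ^ (p₀ ^ n) ^ j), pow_zero, pow_one]

theorem artinSchreier_fgen (e : ℕ) (a : ℕ → A) (x y : A) :
    artinSchreier p₀ n (fgen (p₀ ^ n) e a x y)
      = -(∑ i ∈ range e,
            ((a i * x ^ (p₀ ^ n) ^ i * y) ^ (p₀ ^ n) ^ (e - i) - a i * x ^ (p₀ ^ n) ^ i * y)
          + ((x * Rgen (p₀ ^ n) e a y) ^ (p₀ ^ n) ^ e - x * Rgen (p₀ ^ n) e a y)) := by
  rw [fgen, map_neg, map_sum]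
  simp only [map_add, artinSchreier_sum_range_pow_pow, artinSchreier_pow_pow]
  rw [sum_add_distrib, sum_range_sub (fun i => (x * Rgen (p₀ ^ n) e a y) ^ (p₀ ^ n) ^ i),
    pow_zero, pow_one]

theorem fgen_pow_sub_fgen (e : ℕ) (a : ℕ → A) (x y : A) :
    fgen (p₀ ^ n) e a x y ^ p₀ ^ n - fgen (p₀ ^ n) e a x y
      = -(x ^ (p₀ ^ n) ^ e * Egen (p₀ ^ n) e a y) + x * Rgen (p₀ ^ n) e a y
        + y * Rgen (p₀ ^ n) e a x := by
  rw [← artinSchreier_apply, artinSchreier_fgen]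
  generalize p₀ ^ n = P
  have hsplit (i : ℕ) (hi : i ∈ range e) :
      (a i * x ^ P ^ i * y) ^ P ^ (e - i) - a i * x ^ P ^ i * y
        = x ^ P ^ e * (a i * y) ^ P ^ (e - i) - y * (a i * x ^ P ^ i) := by
    rw [mul_right_comm, mul_pow _ (x ^ _), ← pow_mul, ← pow_add,
      Nat.add_sub_cancel' (mem_range.1 hi).le]
    ring
  have hE : Egen P e a y
      = Rgen P e a y ^ P ^ e + (∑ i ∈ range e, (a i * y) ^ P ^ (e - i) + a e * y) := by
    rw [Egen, sum_range_succ, Nat.sub_self, pow_zero, pow_one]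
  have hRx : Rgen P e a x = ∑ i ∈ range e, a i * x ^ P ^ i + a e * x ^ P ^ e :=
    sum_range_succ _ _
  rw [sum_congr rfl hsplit, sum_sub_distrib, ← mul_sum, ← mul_sum, hE, hRx, mul_pow]
  ring

end ArtinSchreier

theorem statement0_general {F : Type*} [Field F] (p₀ n p e : ℕ)
    (hp₀ : p₀.Prime) [CharP F p₀] (hpn : p = p₀ ^ n)
    (a : ℕ → F) :
    fgen p e (fun i => (MvPolynomial.C (a i) : MvPolynomial (Fin 2) F))
        (MvPolynomial.X 0) (MvPolynomial.X 1) ^ p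
      - fgen p e (fun i => (MvPolynomial.C (a i) : MvPolynomial (Fin 2) F))
        (MvPolynomial.X 0) (MvPolynomial.X 1)
    = -(MvPolynomial.X 0 ^ p ^ e *
          Egen p e (fun i => (MvPolynomial.C (a i) : MvPolynomial (Fin 2) F)) (MvPolynomial.X 1))
      + MvPolynomial.X 0 *
          Rgen p e (fun i => (MvPolynomial.C (a i) : MvPolynomial (Fin 2) F)) (MvPolynomial.X 1)
      + MvPolynomial.X 1 *
          Rgen p e (fun i => (MvPolynomial.C (a i) : MvPolynomial (Fin 2) F)) (MvPolynomial.X 0) := by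
  subst hpn
  have : Fact p₀.Prime := ⟨hp₀⟩
  exact fgen_pow_sub_fgen p₀ n e _ _ _

/-- In `F_q[x,y]` one has
`f_R(x,y)^p − f_R(x,y) = −x^{p^e}·E_R(y) + x·R(y) + y·R(x)`. -/
theorem statement0 {F : Type*} [Field F] [Fintype F] (p₀ n p s q e : ℕ)
    (hp₀ : p₀.Prime) [CharP F p₀] (hn : 0 < n) (hpn : p = p₀ ^ n)
    (hs : 0 < s) (hq : q = p ^ s) (hcard : Fintype.card F = q)
    (a : ℕ → F) (hae : a e ≠ 0) :
    fgen p e (fun i => (MvPolynomial.C (a i) : MvPolynomial (Fin 2) F))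
        (MvPolynomial.X 0) (MvPolynomial.X 1) ^ p
      - fgen p e (fun i => (MvPolynomial.C (a i) : MvPolynomial (Fin 2) F))
        (MvPolynomial.X 0) (MvPolynomial.X 1)
    = -(MvPolynomial.X 0 ^ p ^ e *
          Egen p e (fun i => (MvPolynomial.C (a i) : MvPolynomial (Fin 2) F)) (MvPolynomial.X 1))
      + MvPolynomial.X 0 *
          Rgen p e (fun i => (MvPolynomial.C (a i) : MvPolynomial (Fin 2) F)) (MvPolynomial.X 1)
      + MvPolynomial.X 1 *
          Rgen p e (fun i => (MvPolynomial.C (a i) : MvPolynomial (Fin 2) F)) (MvPolynomial.X 0) :=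
  statement0_general p₀ n p e hp₀ hpn a
end

section
/- For every h = (a,b) ∈ H_R and every natural number i ≥ 2, one has h^i = (i·a, i·b + C(i,2)·f_R(a,a)), where C(i,2) = i(i−1)/2 is a binomial coefficient. Consequently the order of every element of H_R divides p_0 if p_0 is odd, and divides 4 if p_0 = 2. -/
open Finset Polynomial

/-! Integers are fixed by every Frobenius power `x ↦ x ^ p ^ k`, so `f_R(i·x, y) = i·f_R(x, y)`.
Hence multiplying `h^i` by `h = (a, b)` adds `i·f_R(a, a)` to the second coordinate, and these
contributions accumulate to `C(i,2)·f_R(a, a)`. Both `i` and `C(i,2)` vanish in characteristic `p₀`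
for `i = p₀` odd, and for `i = 4` when `p₀ = 2`. -/

section PowerFormula

variable {K : Type*} [CommRing K] {p e : ℕ} {a : ℕ → K}

theorem natCast_pow_pow_of_eq_pow {p₀ n : ℕ} [ExpChar K p₀] (hp : p = p₀ ^ n) (i k : ℕ) :
    (i : K) ^ p ^ k = i := by
  rw [hp, ← pow_mul]
  exact map_natCast (iterateFrobenius K p₀ (n * k)) i

theorem fgen_mul_left {c : K} (hc : ∀ k, c ^ p ^ k = c) (x y : K) :
    fgen p e a (c * x) y = c * fgen p e a x y := by
  have hcomm : ∀ (z : K) (k : ℕ), (c * z) ^ p ^ k = c * z ^ p ^ k := fun z k => by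
    rw [mul_pow, hc]
  simp only [fgen, mul_neg, Finset.mul_sum, mul_add]
  congr 1
  refine Finset.sum_congr rfl fun i _ => ?_
  rw [hcomm x, ← hcomm (x * Rgen p e a y), mul_assoc c x]
  congr 1
  refine Finset.sum_congr rfl fun j _ => ?_
  rw [← hcomm (a i * x ^ p ^ i * y)]
  ring

theorem Hmul_pow_eq {p₀ n : ℕ} [ExpChar K p₀] (hp : p = p₀ ^ n) (h : K × K) (pw : ℕ → K × K)
    (hpw0 : pw 0 = (0, 0)) (hpw : ∀ i, pw (i + 1) = Hmul p e a (pw i) h) (i : ℕ) :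
    pw i = ((i : K) * h.1, (i : K) * h.2 + (i.choose 2 : K) * fgen p e a h.1 h.1) := by
  induction i with
  | zero => simp [hpw0]
  | succ i ih =>
    rw [hpw, ih, Hmul, fgen_mul_left (natCast_pow_pow_of_eq_pow hp i), Nat.choose_succ_succ,
      Nat.choose_one_right]
    ext <;> push_cast <;> ring

end PowerFormula

theorem statement3_general {F K : Type*} [Field F] [Field K] [Algebra F K]
    (p₀ n p e : ℕ) (hp₀ : p₀.Prime) [CharP F p₀] (hpn : p = p₀ ^ n)
    (a : ℕ → F) :
    let aK : ℕ → K := fun i => algebraMap F K (a i)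
    let H : Set (K × K) := Hset p e aK
    let μ : K × K → K × K → K × K := Hmul p e aK
    -- iterated product `h^i` in `H_R` (with `h^0 = (0,0)`, the identity element)
    let μpow : K × K → ℕ → K × K := fun h i =>
      Nat.rec (motive := fun _ => K × K) ((0 : K), (0 : K)) (fun _ ih => μ ih h) i
    (∀ h ∈ H, ∀ i : ℕ, 2 ≤ i →
      μpow h i = ((i : K) * h.1, (i : K) * h.2 + (i.choose 2 : K) * fgen p e aK h.1 h.1)) ∧
    (∀ h ∈ H, (Odd p₀ → μpow h p₀ = (0, 0)) ∧ (p₀ = 2 → μpow h 4 = (0, 0))) := by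
  intro aK H μ μpow
  have : CharP K p₀ := charP_of_injective_algebraMap (algebraMap F K).injective p₀
  have : ExpChar K p₀ := ExpChar.prime hp₀
  have hpow : ∀ h i, μpow h i = _ := fun h =>
    Hmul_pow_eq hpn h (μpow h) rfl fun _ => rfl
  have hpow_eq_zero : ∀ h i, p₀ ∣ i → p₀ ∣ i.choose 2 → μpow h i = (0, 0) := by
    intro h i hi hi2
    rw [hpow, (CharP.cast_eq_zero_iff K p₀ i).2 hi, (CharP.cast_eq_zero_iff K p₀ _).2 hi2]
    simp
  refine ⟨fun h _ i _ => hpow h i, fun h _ => ⟨fun hodd => ?_, fun h2 => ?_⟩⟩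
  · refine hpow_eq_zero h p₀ dvd_rfl (hp₀.dvd_choose_self two_ne_zero ?_)
    exact hp₀.two_le.lt_of_ne' fun h2 => Nat.not_even_iff_odd.2 hodd (h2 ▸ even_two)
  · subst h2
    exact hpow_eq_zero h 4 (by norm_num) (by decide)

/-- for `h = (a,b) ∈ H_R` and `i ≥ 2`, `h^i = (i·a, i·b + C(i,2)·f_R(a,a))`;
hence the order of every element of `H_R` divides `p₀` if `p₀` is odd, and divides `4`
if `p₀ = 2`. -/
theorem statement3 {F K : Type*} [Field F] [Fintype F] [Field K] [IsAlgClosed K] [Algebra F K]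
    (p₀ n p s q e : ℕ) (hp₀ : p₀.Prime) [CharP F p₀] (hn : 0 < n) (hpn : p = p₀ ^ n)
    (hs : 0 < s) (hq : q = p ^ s) (hcard : Fintype.card F = q)
    (a : ℕ → F) (hae : a e ≠ 0) :
    let aK : ℕ → K := fun i => algebraMap F K (a i)
    let H : Set (K × K) := Hset p e aK
    let μ : K × K → K × K → K × K := Hmul p e aK
    -- iterated product `h^i` in `H_R` (with `h^0 = (0,0)`, the identity element)
    let μpow : K × K → ℕ → K × K := fun h i =>
      Nat.rec (motive := fun _ => K × K) ((0 : K), (0 : K)) (fun _ ih => μ ih h) i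
    (∀ h ∈ H, ∀ i : ℕ, 2 ≤ i →
      μpow h i = ((i : K) * h.1, (i : K) * h.2 + (i.choose 2 : K) * fgen p e aK h.1 h.1)) ∧
    (∀ h ∈ H, (Odd p₀ → μpow h p₀ = (0, 0)) ∧ (p₀ = 2 → μpow h 4 = (0, 0))) :=
  statement3_general p₀ n p e hp₀ hpn a
end

section
/- Assume p is odd. If a ∈ F_q satisfies E_R(a) = 0, then the element b := f_R(a,a)/2 lies in F_q and satisfies b^p − b = a·R(a); in particular (a, f_R(a,a)/2) ∈ H_R ∩ (F_q × F_q). -/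
open Finset Polynomial

/-!
Write `℘(y) = y ^ p - y`. Since `y ↦ y ^ p` is additive, `℘` telescopes along Frobenius
orbits: `℘(∑_{j<m} t^{p^j}) = t^{p^m} - t`. Applying this to every inner sum of `f_R(x,x)` and
to `∑_{i<e} (x R(x))^{p^i}` gives the identity `℘(f_R(x,x)) = 2 x R(x) - x^{p^e} E_R(x)`, so on
the roots of `E_R` the element `b = f_R(x,x)/2` solves `℘(b) = x R(x)` (the factor `2` commutes
with `℘` because `2 ^ p = 2`).
-/

section FrobeniusPower

variable {A : Type*} [CommRing A] {p₀ n p : ℕ} [ExpChar A p₀]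

lemma pow_eq_iterateFrobenius (hp : p = p₀ ^ n) (y : A) :
    y ^ p = iterateFrobenius A p₀ n y := by
  rw [iterateFrobenius_def, hp]

lemma pow_sub_self_sum {ι : Type*} (hp : p = p₀ ^ n) (s : Finset ι) (f : ι → A) :
    (∑ i ∈ s, f i) ^ p - ∑ i ∈ s, f i = ∑ i ∈ s, (f i ^ p - f i) := by
  simp only [pow_eq_iterateFrobenius hp, map_sum, sum_sub_distrib]

lemma pow_sub_self_sum_range_pow_pow (hp : p = p₀ ^ n) (t : A) (m : ℕ) :
    (∑ j ∈ range m, t ^ p ^ j) ^ p - ∑ j ∈ range m, t ^ p ^ j = t ^ p ^ m - t := by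
  simp_rw [pow_sub_self_sum hp, ← pow_mul, ← pow_succ]
  rw [sum_range_sub (fun j => t ^ p ^ j), pow_zero, pow_one]

lemma Egen_eq_add_sum_range (p e : ℕ) (a : ℕ → A) (x : A) :
    Egen p e a x = Rgen p e a x ^ p ^ e + ∑ i ∈ range e, (a i * x) ^ p ^ (e - i) + a e * x := by
  rw [Egen, sum_range_succ, Nat.sub_self, pow_zero, pow_one, add_assoc]

lemma fgen_self_pow_sub (hp : p = p₀ ^ n) (e : ℕ) (a : ℕ → A) (x : A) :
    fgen p e a x x ^ p - fgen p e a x x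
      = 2 * (x * Rgen p e a x) - x ^ p ^ e * Egen p e a x := by
  set R := Rgen p e a x with hRdef
  set S := ∑ i ∈ range e, ∑ j ∈ range (e - i), (a i * x ^ p ^ i * x) ^ p ^ j with hSdef
  set T := ∑ i ∈ range e, (x * R) ^ p ^ i
  have hf : fgen p e a x x = -(S + T) := by rw [fgen, sum_add_distrib]
  have hfp : fgen p e a x x ^ p = -(S ^ p + T ^ p) := by
    simp only [hf, pow_eq_iterateFrobenius hp, map_neg, map_add]
  have hterm : ∀ i ∈ range e,
      (a i * x ^ p ^ i * x) ^ p ^ (e - i) = x ^ p ^ e * (a i * x) ^ p ^ (e - i) := by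
    intro i hi
    rw [mul_right_comm, mul_pow, ← pow_mul, ← pow_add, Nat.add_sub_cancel' (mem_range.mp hi).le,
      mul_comm]
  have hRtail : ∑ i ∈ range e, a i * x ^ p ^ i * x = x * (R - a e * x ^ p ^ e) := by
    rw [← sum_mul, mul_comm, hRdef, Rgen, sum_range_succ, add_sub_cancel_right]
  have hS : S ^ p - S
      = x ^ p ^ e * ∑ i ∈ range e, (a i * x) ^ p ^ (e - i) - x * (R - a e * x ^ p ^ e) := by
    rw [hSdef, pow_sub_self_sum hp]
    simp_rw [pow_sub_self_sum_range_pow_pow hp]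
    rw [sum_sub_distrib, sum_congr rfl hterm, ← mul_sum, hRtail]
  have hT : T ^ p - T = (x * R) ^ p ^ e - x * R := pow_sub_self_sum_range_pow_pow hp _ _
  rw [Egen_eq_add_sum_range]
  linear_combination hfp - hf - hS - hT

end FrobeniusPower

lemma map_Rgen {F K : Type*} [CommRing F] [CommRing K] (g : F →+* K) (p e : ℕ)
    (a : ℕ → F) (x : F) :
    g (Rgen p e a x) = Rgen p e (fun i => g (a i)) (g x) := by
  simp [Rgen]

lemma map_Egen {F K : Type*} [CommRing F] [CommRing K] (g : F →+* K) (p e : ℕ)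
    (a : ℕ → F) (x : F) :
    g (Egen p e a x) = Egen p e (fun i => g (a i)) (g x) := by
  simp [Egen, map_Rgen]

lemma map_mem_Hset {F K : Type*} [CommRing F] [CommRing K] (g : F →+* K) {p e : ℕ}
    {a : ℕ → F} {x y : F} (hx : Egen p e a x = 0) (hy : y ^ p - y = x * Rgen p e a x) :
    (g x, g y) ∈ Hset p e (fun i => g (a i)) :=
  ⟨by rw [← map_Egen, hx, map_zero],
    by rw [← map_Rgen, ← map_mul, ← hy, map_sub, map_pow]⟩

lemma half_fgen_self_pow_sub {F : Type*} [Field F] {p₀ n p : ℕ} (hp₀ : p₀.Prime)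
    (hodd : Odd p₀) [CharP F p₀] (hp : p = p₀ ^ n) {e : ℕ} {a : ℕ → F} {x : F}
    (hx : Egen p e a x = 0) :
    (fgen p e a x x / 2) ^ p - fgen p e a x x / 2 = x * Rgen p e a x := by
  have := Fact.mk hp₀
  have h2 : (2 : F) ≠ 0 := Ring.two_ne_zero <| by
    rw [ringChar.eq F p₀]; rintro rfl; exact absurd hodd (by decide)
  have h2p : (2 : F) ^ p = 2 := by rw [hp, ← iterateFrobenius_def, map_ofNat]
  rw [div_pow, h2p, ← sub_div, fgen_self_pow_sub hp, hx, mul_zero, sub_zero,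
    mul_div_cancel_left₀ _ h2]

theorem statement4_general {F K : Type*} [Field F] [Field K] [Algebra F K]
    (p₀ n p e : ℕ) (hp₀ : p₀.Prime) (hodd : Odd p₀) [CharP F p₀]
    (hpn : p = p₀ ^ n) (a : ℕ → F)
    (α : F) (hα : Egen p e a α = 0) :
    (fgen p e a α α / 2) ^ p - fgen p e a α α / 2 = α * Rgen p e a α ∧
    (algebraMap F K α, algebraMap F K (fgen p e a α α / 2)) ∈
      Hset p e (fun i => algebraMap F K (a i)) := by
  have hb := half_fgen_self_pow_sub hp₀ hodd hpn hα
  exact ⟨hb, map_mem_Hset (algebraMap F K) hα hb⟩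

/-- for `p` odd, if `a ∈ F_q` satisfies `E_R(a) = 0` then `b := f_R(a,a)/2`
lies in `F_q` and satisfies `b^p − b = a·R(a)`; in particular
`(a, f_R(a,a)/2) ∈ H_R ∩ (F_q × F_q)`. -/
theorem statement4 {F K : Type*} [Field F] [Fintype F] [Field K] [IsAlgClosed K] [Algebra F K]
    (p₀ n p s q e : ℕ) (hp₀ : p₀.Prime) (hodd : Odd p₀) [CharP F p₀]
    (hn : 0 < n) (hpn : p = p₀ ^ n) (hs : 0 < s) (hq : q = p ^ s)
    (hcard : Fintype.card F = q) (a : ℕ → F) (hae : a e ≠ 0)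
    (α : F) (hα : Egen p e a α = 0) :
    (fgen p e a α α / 2) ^ p - fgen p e a α α / 2 = α * Rgen p e a α ∧
    (algebraMap F K α, algebraMap F K (fgen p e a α α / 2)) ∈
      Hset p e (fun i => algebraMap F K (a i)) :=
  statement4_general p₀ n p e hp₀ hodd hpn a α hα
end

section
/- Assume p is odd. Let ξ : K^× → ℂ^× be a group homomorphism that is trivial on U_K^3. Let γ = Σ_{i ≥ −3} g_i t^i ∈ K^× with g_{−3} ≠ 0 be such that ξ(1 + x + x²/2) = Ψ(γx) for all x ∈ m_K. Define the Gauss sum τ(ξ,Ψ) := q^{−1} Σ_{ζ ∈ F_q^×} Σ_{a,b ∈ F_q} ξ^{−1}(γ·ζ(1+at+bt²))·Ψ(γ·ζ(1+at+bt²)) (the elements ζ(1+at+bt²) form a set of representatives of O_K^×/U_K^3). Then τ(ξ,Ψ) = ξ(γ)^{−1}·Ψ(γ)·Σ_{u ∈ F_q} ψ_{F_q}(g_{−3}·u²/2). -/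
/-! Each summand factors as `ξ(γ)⁻¹ ξ(ζ)⁻¹ ξ(1 + at + bt²)⁻¹ Ψ(γζ(1 + at + bt²))`. As `ξ` is trivial
on `U_K^3`, the truncated exponential `1 + x + x²/2` of `x = at + (b - a²/2)t²` agrees with
`1 + at + bt²` up to a factor in `U_K^3`, so `ξ(1 + at + bt²) = ψ_{F_q}(g₋₂ a + g₋₃ (b - a²/2))`.
The summand then depends on `b` only through `ψ_{F_q}((ζ - 1) g₋₃ b)`; summing over `b` kills every
`ζ ≠ 1` and multiplies the `ζ = 1` term by `q`, leaving the quadratic Gauss sum in `a`. -/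

section

open HahnSeries

variable {F : Type*} [Field F]

noncomputable def principalUnitRep (a b : F) : LaurentSeries F :=
  1 + single 1 a + single 2 b

lemma coeff_neg_one_mul_principalUnitRep (γ : LaurentSeries F) (a b : F) :
    (γ * principalUnitRep a b).coeff (-1) =
      γ.coeff (-1) + γ.coeff (-2) * a + γ.coeff (-3) * b := by
  simp only [principalUnitRep, mul_add, mul_one, coeff_add, coeff_mul_single]
  norm_num

lemma le_orderTop_single_add_single {i j k : ℤ} (hi : k ≤ i) (hj : k ≤ j) (r s : F) :
    (k : WithTop ℤ) ≤ (single i r + single j s : LaurentSeries F).orderTop :=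
  (le_min ((WithTop.coe_le_coe.2 hi).trans orderTop_single_le)
    ((WithTop.coe_le_coe.2 hj).trans orderTop_single_le)).trans min_orderTop_le_orderTop_add

lemma orderTop_principalUnitRep (a b : F) : (principalUnitRep a b).orderTop = 0 := by
  rw [principalUnitRep, add_assoc, orderTop_add_eq_left] <;> rw [orderTop_one]
  exact (WithTop.coe_lt_coe.2 one_pos).trans_le
    (le_orderTop_single_add_single le_rfl one_le_two a b)

lemma principalUnitRep_ne_zero (a b : F) : principalUnitRep a b ≠ 0 := by
  intro h
  simpa [h] using orderTop_principalUnitRep a b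

lemma single_eq_C_mul_pow (k : ℕ) (r : F) :
    (single (k : ℤ) r : LaurentSeries F) = C r * single 1 1 ^ k := by
  rw [single_pow, C_apply, single_mul_single]
  simp

lemma one_add_add_sq_div_two (h2 : (2 : F) ≠ 0) (a c : F) :
    (1 + (single 1 a + single 2 c) + (single 1 a + single 2 c) ^ 2 / 2 : LaurentSeries F) =
      principalUnitRep a (c + a ^ 2 / 2) + (single 3 (a * c) + single 4 (c ^ 2 / 2)) := by
  have h2' : (2 : LaurentSeries F) ≠ 0 := by
    rw [← map_ofNat (C (Γ := ℤ) (R := F)) 2]; exact C_ne_zero h2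
  simp only [principalUnitRep]
  rw [show (1 : ℤ) = (1 : ℕ) by rfl, show (2 : ℤ) = (2 : ℕ) by rfl, show (3 : ℤ) = (3 : ℕ) by rfl,
    show (4 : ℤ) = (4 : ℕ) by rfl]
  simp only [single_eq_C_mul_pow, map_add, map_mul, map_div₀, map_pow, map_ofNat]
  field_simp
  ring

lemma apply_add_eq_of_orderTop_add_le {M : Type*} [MulOneClass M] {ξ : LaurentSeries F → M}
    (hξmul : ∀ x y : LaurentSeries F, x ≠ 0 → y ≠ 0 → ξ (x * y) = ξ x * ξ y)
    {n : ℤ} (hn : 0 < n) (hξU : ∀ x : LaurentSeries F, (n : WithTop ℤ) ≤ x.orderTop → ξ (1 + x) = 1)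
    {u h : LaurentSeries F} (hu : u ≠ 0) (hh : u.orderTop + n ≤ h.orderTop) :
    ξ (u + h) = ξ u := by
  have hinv : u⁻¹.orderTop + u.orderTop = 0 := by
    rw [← orderTop_mul, inv_mul_cancel₀ hu, orderTop_one]
  have hy : (n : WithTop ℤ) ≤ (u⁻¹ * h).orderTop := by
    calc (n : WithTop ℤ) = u⁻¹.orderTop + (u.orderTop + n) := by rw [← add_assoc, hinv, zero_add]
      _ ≤ u⁻¹.orderTop + h.orderTop := by gcongr
      _ = (u⁻¹ * h).orderTop := (orderTop_mul _ _).symm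
  have hne : 1 + u⁻¹ * h ≠ 0 := by
    have h1 : (1 + u⁻¹ * h).orderTop = 0 := by
      rw [orderTop_add_eq_left] <;> rw [orderTop_one]
      exact (WithTop.coe_lt_coe.2 hn).trans_le hy
    intro h0
    simp [h0] at h1
  rw [show u + h = u * (1 + u⁻¹ * h) by field_simp, hξmul _ _ hu hne, hξU _ hy, mul_one]

lemma apply_principalUnitRep {M : Type*} [MulOneClass M] (h2 : (2 : F) ≠ 0)
    {ξ : LaurentSeries F → M} (Φ : F → M)
    (hξmul : ∀ x y : LaurentSeries F, x ≠ 0 → y ≠ 0 → ξ (x * y) = ξ x * ξ y)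
    (hξU3 : ∀ x : LaurentSeries F, 3 ≤ x.orderTop → ξ (1 + x) = 1)
    {γ : LaurentSeries F}
    (hγξ : ∀ x : LaurentSeries F, 1 ≤ x.orderTop → ξ (1 + x + x ^ 2 / 2) = Φ ((γ * x).coeff (-1)))
    (a b : F) :
    ξ (principalUnitRep a b) = Φ (γ.coeff (-2) * a + γ.coeff (-3) * (b - a ^ 2 / 2)) := by
  set c := b - a ^ 2 / 2
  set x : LaurentSeries F := single 1 a + single 2 c
  have hx : 1 ≤ x.orderTop := le_orderTop_single_add_single le_rfl one_le_two a c
  have hres : (γ * x).coeff (-1) = γ.coeff (-2) * a + γ.coeff (-3) * c := by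
    simp only [x, mul_add, coeff_add, coeff_mul_single]
    norm_num
  have hrest : (principalUnitRep a b).orderTop + 3 ≤
      (single 3 (a * c) + single 4 (c ^ 2 / 2) : LaurentSeries F).orderTop := by
    rw [orderTop_principalUnitRep, zero_add]
    exact le_orderTop_single_add_single le_rfl (by norm_num) _ _
  rw [← apply_add_eq_of_orderTop_add_le hξmul three_pos hξU3 (principalUnitRep_ne_zero a b) hrest,
    show b = c + a ^ 2 / 2 by ring, ← one_add_add_sq_div_two h2, hγξ x hx, hres]

lemma gaussSum_term_eq {M : Type*} [Field M] (h2 : (2 : F) ≠ 0) (Φ : AddChar F M)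
    {ξ : LaurentSeries F → M}
    (hξmul : ∀ x y : LaurentSeries F, x ≠ 0 → y ≠ 0 → ξ (x * y) = ξ x * ξ y)
    (hξU3 : ∀ x : LaurentSeries F, 3 ≤ x.orderTop → ξ (1 + x) = 1)
    {γ : LaurentSeries F} (hγ : γ ≠ 0)
    (hγξ : ∀ x : LaurentSeries F, 1 ≤ x.orderTop → ξ (1 + x + x ^ 2 / 2) = Φ ((γ * x).coeff (-1)))
    (ζ : Fˣ) (a b : F) :
    (ξ (γ * (C (ζ : F) * principalUnitRep a b)))⁻¹ *
        Φ ((γ * (C (ζ : F) * principalUnitRep a b)).coeff (-1)) =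
      (ξ γ)⁻¹ * (ξ (C (ζ : F)))⁻¹ *
        Φ (ζ * γ.coeff (-1) + (ζ - 1) * γ.coeff (-2) * a + γ.coeff (-3) * a ^ 2 / 2) *
        Φ (b * ((ζ - 1) * γ.coeff (-3))) := by
  have hC : (C (ζ : F) : LaurentSeries F) ≠ 0 := C_ne_zero ζ.ne_zero
  have hres : (γ * (C (ζ : F) * principalUnitRep a b)).coeff (-1) =
      ζ * (γ.coeff (-1) + γ.coeff (-2) * a + γ.coeff (-3) * b) := by
    rw [mul_left_comm, C_mul_eq_smul, coeff_smul, coeff_neg_one_mul_principalUnitRep, smul_eq_mul]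
  rw [hξmul _ _ hγ (mul_ne_zero hC (principalUnitRep_ne_zero a b)),
    hξmul _ _ hC (principalUnitRep_ne_zero a b), apply_principalUnitRep h2 Φ hξmul hξU3 hγξ, hres,
    mul_inv, mul_inv, ← AddChar.map_neg_eq_inv]
  simp only [mul_assoc, ← AddChar.map_add_eq_mul]
  congr 3
  ring

lemma gaussSum_eq {M : Type*} [Field M] [Fintype F] [DecidableEq F] (h2 : (2 : F) ≠ 0)
    {Φ : AddChar F M} (hΦ : Φ.IsPrimitive) {ξ : LaurentSeries F → M}
    (hξmul : ∀ x y : LaurentSeries F, x ≠ 0 → y ≠ 0 → ξ (x * y) = ξ x * ξ y) (hξone : ξ 1 = 1)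
    (hξU3 : ∀ x : LaurentSeries F, 3 ≤ x.orderTop → ξ (1 + x) = 1)
    {γ : LaurentSeries F} (hγ3 : γ.coeff (-3) ≠ 0)
    (hγξ : ∀ x : LaurentSeries F, 1 ≤ x.orderTop → ξ (1 + x + x ^ 2 / 2) = Φ ((γ * x).coeff (-1))) :
    ∑ ζ : Fˣ, ∑ a : F, ∑ b : F, (ξ (γ * (C (ζ : F) * principalUnitRep a b)))⁻¹ *
        Φ ((γ * (C (ζ : F) * principalUnitRep a b)).coeff (-1)) =
      Fintype.card F * ((ξ γ)⁻¹ * Φ (γ.coeff (-1)) * ∑ u : F, Φ (γ.coeff (-3) * u ^ 2 / 2)) := by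
  have hγ : γ ≠ 0 := fun h ↦ hγ3 (by simp [h])
  have hsum_b (ζ : Fˣ) : ∑ b : F, Φ (b * ((ζ - 1) * γ.coeff (-3))) =
      if ζ = 1 then (Fintype.card F : M) else 0 := by
    rw [AddChar.sum_mulShift _ hΦ]
    simp [hγ3, sub_eq_zero, Units.val_eq_one]
  simp only [gaussSum_term_eq h2 Φ hξmul hξU3 hγ hγξ, ← Finset.mul_sum, hsum_b]
  rw [Finset.sum_eq_single_of_mem 1 (Finset.mem_univ _) fun ζ _ hζ ↦ by simp [hζ]]
  simp only [Units.val_one, map_one, hξone, sub_self, AddChar.map_add_eq_mul, one_mul, zero_mul,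
    AddChar.map_zero_eq_one, inv_one, mul_one, if_true, Finset.mul_sum]
  exact Finset.sum_congr rfl fun _ _ ↦ by ring

end

theorem statement6_general {Fp F : Type*} [Field Fp] [Field F] [Fintype F] [DecidableEq F] [Algebra Fp F]
    (p₀ q : ℕ) (hodd : Odd p₀) [CharP F p₀]
    (hcard : Fintype.card F = q)
    -- a nontrivial additive character `ψ` of `F_p`, and `Ψ(x) := ψ(Tr_{F_q/F_p}(res(x dt)))`
    (ψ : AddChar Fp ℂ) (hψ : ∃ x : Fp, ψ x ≠ 1)
    -- `ξ : K^× → ℂ^×` a group homomorphism, trivial on `U_K^3`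
    (ξ : LaurentSeries F → ℂ)
    (hξmul : ∀ x y : LaurentSeries F, x ≠ 0 → y ≠ 0 → ξ (x * y) = ξ x * ξ y)
    (hξone : ξ 1 = 1)
    (hξU3 : ∀ x : LaurentSeries F, (∀ j : ℤ, j < 3 → x.coeff j = 0) → ξ (1 + x) = 1)
    -- `γ = Σ_{i ≥ −3} g_i t^i` with `g_{−3} ≠ 0`
    (γ : LaurentSeries F) (hγ3 : γ.coeff (-3) ≠ 0)
    -- `ξ(1 + x + x²/2) = Ψ(γ x)` for all `x ∈ m_K`
    (hγξ : ∀ x : LaurentSeries F, (∀ j : ℤ, j < 1 → x.coeff j = 0) →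
      ξ (1 + x + x ^ 2 / 2) = ψ (Algebra.trace Fp F ((γ * x).coeff (-1)))) :
    -- `τ(ξ,Ψ) = ξ(γ)⁻¹ Ψ(γ) Σ_u ψ_{F_q}(g_{−3} u²/2)`
    (q : ℂ)⁻¹ * ∑ ζ : Fˣ, ∑ a : F, ∑ b : F,
        (ξ (γ * (HahnSeries.C (ζ : F) *
            (1 + HahnSeries.single 1 a + HahnSeries.single 2 b))))⁻¹ *
          ψ (Algebra.trace Fp F ((γ * (HahnSeries.C (ζ : F) *
            (1 + HahnSeries.single 1 a + HahnSeries.single 2 b))).coeff (-1)))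
      = (ξ γ)⁻¹ * ψ (Algebra.trace Fp F (γ.coeff (-1))) *
          ∑ u : F, ψ (Algebra.trace Fp F (γ.coeff (-3) * u ^ 2 / 2)) := by
  let Φ : AddChar F ℂ := ψ.compAddMonoidHom (Algebra.trace Fp F).toAddMonoidHom
  have hΦ : Φ.IsPrimitive := by
    refine AddChar.IsPrimitive.of_ne_one fun h ↦ ?_
    obtain ⟨x, hx⟩ := hψ
    obtain ⟨y, rfl⟩ := Algebra.trace_surjective Fp F x
    exact hx (DFunLike.congr_fun h y)
  have h2 : (2 : F) ≠ 0 := Ring.two_ne_zero <| by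
    rw [ringChar.eq F p₀]
    rintro rfl
    exact Nat.not_odd_iff_even.2 even_two hodd
  have hq : (q : ℂ) ≠ 0 := by rw [← hcard]; exact_mod_cast Fintype.card_ne_zero
  refine (inv_mul_eq_iff_eq_mul₀ hq).2 ?_
  rw [← hcard]
  exact gaussSum_eq h2 hΦ hξmul hξone
    (fun x hx ↦ hξU3 x fun j hj ↦
      HahnSeries.le_orderTop_iff_forall.1 hx j (WithTop.coe_lt_coe.2 hj)) hγ3
    (fun x hx ↦ hγξ x fun j hj ↦
      HahnSeries.le_orderTop_iff_forall.1 hx j (WithTop.coe_lt_coe.2 hj))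

/-- evaluation of the Gauss sum `τ(ξ,Ψ)` for a character `ξ` of `K^×`
(`K = F_q((t))`) trivial on `U_K^3`, with `Sw(ξ)` generated by `γ ∈ m_K^{-3} ∖ m_K^{-2}`:
`τ(ξ,Ψ) = ξ(γ)⁻¹ · Ψ(γ) · Σ_{u ∈ F_q} ψ_{F_q}(g_{−3} u²/2)`. -/
theorem statement6 {Fp F : Type*} [Field Fp] [Fintype Fp] [Field F] [Fintype F] [DecidableEq F] [Algebra Fp F]
    (p₀ n p s q e : ℕ) (hp₀ : p₀.Prime) (hodd : Odd p₀) [CharP F p₀]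
    (hn : 0 < n) (hpn : p = p₀ ^ n) (hs : 0 < s) (hq : q = p ^ s)
    (hcardp : Fintype.card Fp = p) (hcard : Fintype.card F = q)
    -- a nontrivial additive character `ψ` of `F_p`, and `Ψ(x) := ψ(Tr_{F_q/F_p}(res(x dt)))`
    (ψ : AddChar Fp ℂ) (hψ : ∃ x : Fp, ψ x ≠ 1)
    -- `ξ : K^× → ℂ^×` a group homomorphism, trivial on `U_K^3`
    (ξ : LaurentSeries F → ℂ)
    (hξmul : ∀ x y : LaurentSeries F, x ≠ 0 → y ≠ 0 → ξ (x * y) = ξ x * ξ y)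
    (hξne : ∀ x : LaurentSeries F, x ≠ 0 → ξ x ≠ 0) (hξone : ξ 1 = 1)
    (hξU3 : ∀ x : LaurentSeries F, (∀ j : ℤ, j < 3 → x.coeff j = 0) → ξ (1 + x) = 1)
    -- `γ = Σ_{i ≥ −3} g_i t^i` with `g_{−3} ≠ 0`
    (γ : LaurentSeries F) (hγ3 : γ.coeff (-3) ≠ 0) (hγlow : ∀ j : ℤ, j < -3 → γ.coeff j = 0)
    -- `ξ(1 + x + x²/2) = Ψ(γ x)` for all `x ∈ m_K`
    (hγξ : ∀ x : LaurentSeries F, (∀ j : ℤ, j < 1 → x.coeff j = 0) →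
      ξ (1 + x + x ^ 2 / 2) = ψ (Algebra.trace Fp F ((γ * x).coeff (-1)))) :
    -- `τ(ξ,Ψ) = ξ(γ)⁻¹ Ψ(γ) Σ_u ψ_{F_q}(g_{−3} u²/2)`
    (q : ℂ)⁻¹ * ∑ ζ : Fˣ, ∑ a : F, ∑ b : F,
        (ξ (γ * (HahnSeries.C (ζ : F) *
            (1 + HahnSeries.single 1 a + HahnSeries.single 2 b))))⁻¹ *
          ψ (Algebra.trace Fp F ((γ * (HahnSeries.C (ζ : F) *
            (1 + HahnSeries.single 1 a + HahnSeries.single 2 b))).coeff (-1)))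
      = (ξ γ)⁻¹ * ψ (Algebra.trace Fp F (γ.coeff (-1))) *
          ∑ u : F, ψ (Algebra.trace Fp F (γ.coeff (-3) * u ^ 2 / 2)) :=
  statement6_general p₀ q hodd hcard ψ hψ ξ hξmul hξone hξU3 γ hγ3 hγξ
end

section
/- Assume p is odd and e ≥ 1. Let a ∈ V_R with a ≠ 0, b := f_R(a,a)/2, u(x) := x^p − a^{p−1}x, Δ_0(x) := −(x/a)·((b/a)x − f_R(x,a)), and let R_1 be the unique additive polynomial of degree p^{e−1} with x·R(x) = u(x)·R_1(u(x)) + Δ_0(x)^p − Δ_0(x). Let a' ∈ V_R with ω_R(a,a') = 0 (where ω_R(a,a') := f_R(a,a') − f_R(a',a)). Then π(a') := (u(a'), f_{R_1}(u(a'),u(a'))/2) belongs to H_{R_1}; that is, E_{R_1}(u(a')) = 0 and (f_{R_1}(u(a'),u(a'))/2)^p − f_{R_1}(u(a'),u(a'))/2 = u(a')·R_1(u(a')). -/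
open Finset Polynomial

/-!
Polarizing the defining identity `x R(x) = u(x) R₁(u(x)) + Δ₀(x)^p - Δ₀(x)` at `(X, a')` and
combining it with the identity `f_S(x,y)^p - f_S(x,y) = x S(y) + y S(x) - x^{p^d} E_S(y)`
(for `S = R` and `S = R₁`) shows that
`W(X) := f_R(X,a') - f_{R₁}(u X, u a') - (Δ₀(X + a') - Δ₀(X) - Δ₀(a'))`
satisfies `W^p - W = E_{R₁}(u a') · u(X)^{p^{e-1}}`, where `E_R(a') = 0` removes the other term.
`W` vanishes at `0`, and at `a` because `ω_R(a,a') = 0` and `b = f_R(a,a)/2`. Comparing the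
lowest and the highest terms of `W^p - W` then forces `W = w X^{p^{e-1}}`, hence `W = 0` and
`E_{R₁}(u a') = 0`. The second coordinate is the same identity at `x = y = u(a')`.
-/

section Naturality
variable {A B : Type*} [CommRing A] [CommRing B] (φ : A →+* B) (p d : ℕ) (s : ℕ → A)

theorem map_Rgen_s9 (x : A) : φ (Rgen p d s x) = Rgen p d (fun i => φ (s i)) (φ x) := by
  simp [Rgen, map_sum]

theorem map_Egen_s9 (x : A) : φ (Egen p d s x) = Egen p d (fun i => φ (s i)) (φ x) := by
  simp [Egen, map_sum, map_Rgen_s9]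

theorem map_fgen (x y : A) : φ (fgen p d s x y) = fgen p d (fun i => φ (s i)) (φ x) (φ y) := by
  simp [fgen, map_sum, map_Rgen_s9]

end Naturality

namespace Polynomial
variable {K : Type*} [CommRing K] (p d : ℕ) (s : ℕ → K)

theorem Rgen_comp (x z : K[X]) :
    (Rgen p d (fun i => C (s i)) x).comp z = Rgen p d (fun i => C (s i)) (x.comp z) := by
  simpa using map_Rgen_s9 (compRingHom z) p d (fun i => C (s i)) x

theorem fgen_comp (x y z : K[X]) :
    (fgen p d (fun i => C (s i)) x y).comp z =
      fgen p d (fun i => C (s i)) (x.comp z) (y.comp z) := by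
  simpa using map_fgen (compRingHom z) p d (fun i => C (s i)) x y

theorem eval_fgen (x y : K[X]) (t : K) :
    (fgen p d (fun i => C (s i)) x y).eval t = fgen p d s (x.eval t) (y.eval t) := by
  simpa using map_fgen (evalRingHom t) p d (fun i => C (s i)) x y

end Polynomial

section Frobenius
variable (A : Type*) [CommRing A] {p₀ n p : ℕ} [ExpChar A p₀]

def frobeniusPow (hp : p = p₀ ^ n) (k : ℕ) : A →+* A :=
  (iterateFrobenius A p₀ (n * k)).copy (· ^ p ^ k) <| by
    funext x; rw [iterateFrobenius_def, pow_mul, hp]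

@[simp]
theorem frobeniusPow_apply (hp : p = p₀ ^ n) (k : ℕ) (x : A) :
    frobeniusPow A hp k x = x ^ p ^ k :=
  rfl

variable {A}

theorem add_pow_pow (hp : p = p₀ ^ n) (k : ℕ) (x y : A) :
    (x + y) ^ p ^ k = x ^ p ^ k + y ^ p ^ k :=
  map_add (frobeniusPow A hp k) x y

theorem sub_pow_pow (hp : p = p₀ ^ n) (k : ℕ) (x y : A) :
    (x - y) ^ p ^ k = x ^ p ^ k - y ^ p ^ k :=
  map_sub (frobeniusPow A hp k) x y

theorem add_pow_of_eq_expChar_pow (hp : p = p₀ ^ n) (x y : A) : (x + y) ^ p = x ^ p + y ^ p := by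
  simpa using add_pow_pow hp 1 x y

theorem Rgen_add (hp : p = p₀ ^ n) (d : ℕ) (s : ℕ → A) (x y : A) :
    Rgen p d s (x + y) = Rgen p d s x + Rgen p d s y := by
  simp only [Rgen, add_pow_pow hp, mul_add, sum_add_distrib]

theorem fgen_add_left (hp : p = p₀ ^ n) (d : ℕ) (s : ℕ → A) (x x' y : A) :
    fgen p d s (x + x') y = fgen p d s x y + fgen p d s x' y := by
  simp only [fgen, mul_add, add_mul, add_pow_pow hp, sum_add_distrib]
  ring

theorem fgen_zero_left (hp : p = p₀ ^ n) (d : ℕ) (s : ℕ → A) (y : A) :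
    fgen p d s 0 y = 0 := by
  simpa using fgen_add_left hp d s 0 0 y

theorem sum_pow_pow_pow_sub_sum (hp : p = p₀ ^ n) (z : A) (m : ℕ) :
    (∑ j ∈ range m, z ^ p ^ j) ^ p - ∑ j ∈ range m, z ^ p ^ j = z ^ p ^ m - z := by
  have hfrob : (∑ j ∈ range m, z ^ p ^ j) ^ p = ∑ j ∈ range m, z ^ p ^ (j + 1) := by
    have h := map_sum (frobeniusPow A hp 1) (fun j => z ^ p ^ j) (range m)
    simpa only [frobeniusPow_apply, pow_one, ← pow_mul, ← pow_succ] using h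
  rw [hfrob, ← sum_sub_distrib, sum_range_sub (fun j => z ^ p ^ j)]
  simp

theorem fgen_pow_sub_self (hp : p = p₀ ^ n) (d : ℕ) (s : ℕ → A) (x y : A) :
    fgen p d s x y ^ p - fgen p d s x y =
      x * Rgen p d s y + y * Rgen p d s x - x ^ p ^ d * Egen p d s y := by
  set t : ℕ → A := fun i => s i * x ^ p ^ i * y
  set B := x * Rgen p d s y
  have hfrob (z : A) : z ^ p = frobeniusPow A hp 1 z := by simp
  have htele : fgen p d s x y ^ p - fgen p d s x y =
      -(∑ i ∈ range d, (t i ^ p ^ (d - i) - t i) + (B ^ p ^ d - B)) := by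
    have hf : fgen p d s x y =
        -(∑ i ∈ range d, ∑ j ∈ range (d - i), t i ^ p ^ j +
          ∑ i ∈ range d, B ^ p ^ i) := by
      rw [fgen, sum_add_distrib]
    have hsum (z : A) (m : ℕ) := eq_add_of_sub_eq (sum_pow_pow_pow_sub_sum hp z m)
    rw [hf, hfrob, map_neg, map_add, map_sum]
    simp only [← hfrob, hsum, sum_add_distrib]
    ring
  have hpow (i : ℕ) (hi : i ∈ range d) :
      t i ^ p ^ (d - i) = (s i * y) ^ p ^ (d - i) * x ^ p ^ d := by
    rw [← Nat.add_sub_cancel' (mem_range.mp hi).le]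
    simp only [t, mul_pow, ← pow_mul, ← pow_add, Nat.add_sub_cancel_left]
    ring
  have hR : ∑ i ∈ range d, t i = (Rgen p d s x - s d * x ^ p ^ d) * y := by
    rw [Rgen, sum_range_succ, ← sum_mul]
    ring
  have hE : ∑ i ∈ range d, (s i * y) ^ p ^ (d - i) =
      Egen p d s y - Rgen p d s y ^ p ^ d - s d * y := by
    rw [Egen, sum_range_succ]
    simp
  rw [htele, sum_sub_distrib, sum_congr rfl hpow, ← sum_mul, hE, hR, mul_pow]
  ring

theorem pow_sub_self_of_quotient_identity (hp : p = p₀ ^ n) (e d : ℕ) (s c : ℕ → A)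
    (u D : A → A) (hu : ∀ x y, u (x + y) = u x + u y)
    (hquot : ∀ x, x * Rgen p e s x = u x * Rgen p d c (u x) + D x ^ p - D x) (x y : A) :
    (fgen p e s x y - fgen p d c (u x) (u y) - (D (x + y) - D x - D y)) ^ p -
        (fgen p e s x y - fgen p d c (u x) (u y) - (D (x + y) - D x - D y)) =
      u x ^ p ^ d * Egen p d c (u y) - x ^ p ^ e * Egen p e s y := by
  have hfrob (z : A) : z ^ p = frobeniusPow A hp 1 z := by simp
  have hxy := hquot (x + y)
  rw [Rgen_add hp, hu, Rgen_add hp] at hxy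
  rw [hfrob, map_sub, map_sub, map_sub, map_sub]
  simp only [← hfrob]
  linear_combination fgen_pow_sub_self hp e s x y - fgen_pow_sub_self hp d c (u x) (u y) -
    hquot x - hquot y + hxy

theorem fgen_self_div_two_pow_sub_self {K : Type*} [Field K] [ExpChar K p₀] (hp : p = p₀ ^ n)
    (h2 : (2 : K) ≠ 0) (d : ℕ) (c : ℕ → K) {z : K} (hz : Egen p d c z = 0) :
    (fgen p d c z z / 2) ^ p - fgen p d c z z / 2 = z * Rgen p d c z := by
  have h2p : (2 : K) ^ p = 2 := by simpa using map_ofNat (frobeniusPow K hp 1) 2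
  have h := fgen_pow_sub_self hp d c z z
  rw [hz, mul_zero, sub_zero] at h
  rw [div_pow, h2p]
  field_simp
  linear_combination h

end Frobenius

namespace Polynomial
variable {K : Type*} [CommRing K] [IsDomain K]

theorem eq_zero_of_pow_sub_self_eq {p N : ℕ} (hp : 2 ≤ p) (hN : 0 < N) {W : K[X]} {E B α : K}
    (hα : α ≠ 0) (hW0 : W.eval 0 = 0) (hWα : W.eval α = 0)
    (hW : W ^ p - W = C E * X ^ (p * N) - C B * X ^ N) : E = 0 := by
  have hcoeff (j : ℕ) : (W ^ p).coeff j - W.coeff j =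
      (if j = p * N then E else 0) - if j = N then B else 0 := by
    simpa [coeff_X_pow] using congrArg (coeff · j) hW
  have hdvd : X ^ N ∣ W := by
    refine X_pow_dvd_iff.mpr fun j hj => ?_
    induction j using Nat.strong_induction_on with
    | _ j ih =>
      rcases j.eq_zero_or_pos with rfl | hj0
      · rwa [coeff_zero_eq_eval_zero]
      have hXj : X ^ j ∣ W := X_pow_dvd_iff.mpr fun i hi => ih i hi (hi.trans hj)
      have hpow : (W ^ p).coeff j = 0 := by
        obtain ⟨Q, hQ⟩ := pow_dvd_pow_of_dvd hXj p
        rw [hQ, ← pow_mul, coeff_X_pow_mul', if_neg (by nlinarith)]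
      have := hcoeff j
      rw [hpow, if_neg (by nlinarith), if_neg hj.ne] at this
      linear_combination -this
  have hdeg : W.natDegree ≤ N := by
    by_contra! hlt
    have hsub : (W ^ p - W).natDegree = p * W.natDegree := by
      rw [natDegree_sub_eq_left_of_natDegree_lt, natDegree_pow]
      rw [natDegree_pow]
      nlinarith
    have hrhs : (C E * X ^ (p * N) - C B * X ^ N).natDegree ≤ p * N :=
      (natDegree_sub_le _ _).trans <| max_le (natDegree_C_mul_X_pow_le _ _)
        ((natDegree_C_mul_X_pow_le _ _).trans (by nlinarith))
    rw [← hW, hsub] at hrhs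
    nlinarith
  have hWzero : W = 0 := by
    obtain ⟨Q, rfl⟩ := hdvd
    by_contra hne
    have hQ : Q ≠ 0 := right_ne_zero_of_mul hne
    rw [natDegree_mul (pow_ne_zero _ X_ne_zero) hQ, natDegree_X_pow] at hdeg
    rw [eq_C_of_natDegree_eq_zero (by omega : Q.natDegree = 0)] at hWα hQ
    simp_all
  have := hcoeff (p * N)
  rw [hWzero, if_pos rfl, if_neg (by nlinarith)] at this
  simpa [zero_pow (by omega : p ≠ 0)] using this.symm

end Polynomial

section Quotient
variable {K : Type*} [Field K] {p₀ n p : ℕ} [ExpChar K p₀]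

theorem Egen_quotient_eq_zero (hp : p = p₀ ^ n) (hp1 : 1 < p) (h2 : (2 : K) ≠ 0) (e d : ℕ)
    (s c : ℕ → K) {α : K} (hα : α ≠ 0)
    (hc : X * Rgen p e (fun i => C (s i)) X =
      (X ^ p - C (α ^ (p - 1)) * X) * Rgen p d (fun i => C (c i)) (X ^ p - C (α ^ (p - 1)) * X) +
      (-(C α⁻¹ * X) *
        (C (fgen p e s α α / 2 / α) * X - fgen p e (fun i => C (s i)) X (C α))) ^ p -
      -(C α⁻¹ * X) * (C (fgen p e s α α / 2 / α) * X - fgen p e (fun i => C (s i)) X (C α)))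
    {α' : K} (hα' : Egen p e s α' = 0) (hω : fgen p e s α α' = fgen p e s α' α) :
    Egen p d c (α' ^ p - α ^ (p - 1) * α') = 0 := by
  set b := fgen p e s α α / 2 / α
  set u : K[X] → K[X] := fun x => x ^ p - C (α ^ (p - 1)) * x
  set D : K[X] → K[X] := fun x =>
    -(C α⁻¹ * x) * (C b * x - fgen p e (fun i => C (s i)) x (C α))
  have hu (x y : K[X]) : u (x + y) = u x + u y := by
    simp only [u, add_pow_of_eq_expChar_pow hp]
    ring
  have hquot (x : K[X]) :
      x * Rgen p e (fun i => C (s i)) x =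
        u x * Rgen p d (fun i => C (c i)) (u x) + D x ^ p - D x := by
    have h := congrArg (·.comp x) hc
    simp only [mul_comp, add_comp, sub_comp, pow_comp, neg_comp, X_comp, C_comp, Rgen_comp,
      fgen_comp] at h
    exact h
  have hW := pow_sub_self_of_quotient_identity hp e d _ _ u D hu hquot X (C α')
  have hEα' : Egen p e (fun i => C (s i)) (C α') = 0 := by
    rw [← map_Egen_s9, hα', map_zero]
  have huα' : u (C α') = C (α' ^ p - α ^ (p - 1) * α') := by simp [u]
  have huX : u X ^ p ^ d = X ^ (p * p ^ d) - C ((α ^ (p - 1)) ^ p ^ d) * X ^ p ^ d := by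
    simp only [u, sub_pow_pow hp, mul_pow, ← pow_mul, map_pow]
  rw [hEα', mul_zero, sub_zero, huα', ← map_Egen_s9, huX] at hW
  refine Polynomial.eq_zero_of_pow_sub_self_eq (N := p ^ d)
    (B := (α ^ (p - 1)) ^ p ^ d * Egen p d c (α' ^ p - α ^ (p - 1) * α')) (by omega)
    (by positivity) hα ?_ ?_ (hW.trans (by rw [map_mul]; ring))
  · simp [u, D, eval_fgen, fgen_zero_left hp, zero_pow (by omega : p ≠ 0)]
  · have huα : α ^ p - α ^ (p - 1) * α = 0 := by
      rw [← pow_succ, Nat.sub_add_cancel hp1.le, sub_self]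
    simp only [u, D, eval_sub, eval_add, eval_mul, eval_neg, eval_pow, eval_C, eval_X, eval_fgen,
      huα, fgen_zero_left hp, fgen_add_left hp, b]
    -- `b = f(α, α) / (2α)` makes the polarization of `D` at `(α, α')` equal to `f(α', α)`
    field_simp
    linear_combination 2 * α ^ 2 * hω

end Quotient

theorem statement9_general {F K : Type*} [Field F] [Field K] [Algebra F K]
    (p₀ n p e : ℕ) (hp₀ : p₀.Prime) (hodd : Odd p₀) [CharP F p₀]
    (hn : 0 < n) (hpn : p = p₀ ^ n) (a : ℕ → F)
    (α : K) (hα0 : α ≠ 0)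
    -- `R₁(z) = ∑_{i=0}^{e-1} c_i z^{p^i}` is the additive polynomial of the quotient step
    (c : ℕ → K)
    (hc : Polynomial.X * Rgen p e (fun i => Polynomial.C (algebraMap F K (a i))) Polynomial.X =
      (Polynomial.X ^ p - Polynomial.C (α ^ (p - 1)) * Polynomial.X) *
        Rgen p (e - 1) (fun i => Polynomial.C (c i))
          (Polynomial.X ^ p - Polynomial.C (α ^ (p - 1)) * Polynomial.X) +
      (-(Polynomial.C α⁻¹ * Polynomial.X) *
        (Polynomial.C (fgen p e (fun i => algebraMap F K (a i)) α α / 2 / α) * Polynomial.X -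
          fgen p e (fun i => Polynomial.C (algebraMap F K (a i))) Polynomial.X
            (Polynomial.C α))) ^ p -
      -(Polynomial.C α⁻¹ * Polynomial.X) *
        (Polynomial.C (fgen p e (fun i => algebraMap F K (a i)) α α / 2 / α) * Polynomial.X -
          fgen p e (fun i => Polynomial.C (algebraMap F K (a i))) Polynomial.X
            (Polynomial.C α)))
    (α' : K) (hα'V : Egen p e (fun i => algebraMap F K (a i)) α' = 0)
    (hω : fgen p e (fun i => algebraMap F K (a i)) α α' =
      fgen p e (fun i => algebraMap F K (a i)) α' α) :
    let ua' : K := α' ^ p - α ^ (p - 1) * α'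
    Egen p (e - 1) c ua' = 0 ∧
    (fgen p (e - 1) c ua' ua' / 2) ^ p - fgen p (e - 1) c ua' ua' / 2 =
      ua' * Rgen p (e - 1) c ua' := by
  intro ua'
  have : Fact p₀.Prime := ⟨hp₀⟩
  have : CharP K p₀ := charP_of_injective_algebraMap (algebraMap F K).injective p₀
  have hp1 : 1 < p := hpn ▸ Nat.one_lt_pow hn.ne' hp₀.one_lt
  have h2 : (2 : K) ≠ 0 := Ring.two_ne_zero <| by
    rw [ringChar.eq K p₀]
    rintro rfl
    exact absurd hodd (by decide)
  have hE : Egen p (e - 1) c ua' = 0 :=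
    Egen_quotient_eq_zero hpn hp1 h2 e (e - 1) (fun i => algebraMap F K (a i)) c hα0 hc hα'V hω
  exact ⟨hE, fgen_self_div_two_pow_sub_self hpn h2 (e - 1) c hE⟩

/-- with the notation of the quotient step, for `a' ∈ V_R` with `ω_R(a,a') = 0`,
the pair `π(a') := (u(a'), f_{R₁}(u(a'),u(a'))/2)` belongs to `H_{R₁}`: that is,
`E_{R₁}(u(a')) = 0` and `(f_{R₁}(u(a'),u(a'))/2)^p − f_{R₁}(u(a'),u(a'))/2 = u(a')·R₁(u(a'))`. -/
theorem statement9 {F K : Type*} [Field F] [Fintype F] [Field K] [IsAlgClosed K] [Algebra F K]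
    (p₀ n p s q e : ℕ) (hp₀ : p₀.Prime) (hodd : Odd p₀) [CharP F p₀]
    (hn : 0 < n) (hpn : p = p₀ ^ n) (hs : 0 < s) (hq : q = p ^ s)
    (hcard : Fintype.card F = q) (a : ℕ → F) (hae : a e ≠ 0) (he : 1 ≤ e)
    (α : K) (hαV : Egen p e (fun i => algebraMap F K (a i)) α = 0) (hα0 : α ≠ 0)
    -- `R₁(z) = ∑_{i=0}^{e-1} c_i z^{p^i}` is the additive polynomial of the quotient step
    (c : ℕ → K)
    (hc : Polynomial.X * Rgen p e (fun i => Polynomial.C (algebraMap F K (a i))) Polynomial.X =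
      (Polynomial.X ^ p - Polynomial.C (α ^ (p - 1)) * Polynomial.X) *
        Rgen p (e - 1) (fun i => Polynomial.C (c i))
          (Polynomial.X ^ p - Polynomial.C (α ^ (p - 1)) * Polynomial.X) +
      (-(Polynomial.C α⁻¹ * Polynomial.X) *
        (Polynomial.C (fgen p e (fun i => algebraMap F K (a i)) α α / 2 / α) * Polynomial.X -
          fgen p e (fun i => Polynomial.C (algebraMap F K (a i))) Polynomial.X
            (Polynomial.C α))) ^ p -
      -(Polynomial.C α⁻¹ * Polynomial.X) *
        (Polynomial.C (fgen p e (fun i => algebraMap F K (a i)) α α / 2 / α) * Polynomial.X -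
          fgen p e (fun i => Polynomial.C (algebraMap F K (a i))) Polynomial.X
            (Polynomial.C α)))
    (α' : K) (hα'V : Egen p e (fun i => algebraMap F K (a i)) α' = 0)
    (hω : fgen p e (fun i => algebraMap F K (a i)) α α' =
      fgen p e (fun i => algebraMap F K (a i)) α' α) :
    let ua' : K := α' ^ p - α ^ (p - 1) * α'
    Egen p (e - 1) c ua' = 0 ∧
    (fgen p (e - 1) c ua' ua' / 2) ^ p - fgen p (e - 1) c ua' ua' / 2 =
      ua' * Rgen p (e - 1) c ua' :=
  statement9_general p₀ n p e hp₀ hodd hn hpn a α hα0 c hc α' hα'V hω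
end

section
/- Assume p is odd. If y ∈ F_q satisfies E_R(y) = 0, then Tr_{F_q/F_p}(y·R(y)) = 0. -/
/-!
Multiplying by `y ^ p ^ e` turns every term of `E_R(y)` into a `p`-power iterate of a term of
`y R(y)`: `y ^ p ^ e E_R(y) = (y R(y)) ^ p ^ e + ∑ i, (a_i y ^ p ^ i y) ^ p ^ (e - i)`.
Since `x ↦ x ^ p` is an `F_p`-automorphism of `F_q`, the trace does not see these powers, so
`0 = Tr(y ^ p ^ e E_R(y)) = 2 Tr(y R(y))`, and `2` is invertible as `p` is odd.
-/

open Finset Polynomial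

section Additive

variable {A : Type*} [CommRing A] (p e : ℕ) (a : ℕ → A) (y : A)

theorem mul_Rgen : y * Rgen p e a y = ∑ i ∈ range (e + 1), a i * y ^ p ^ i * y := by
  rw [Rgen, mul_sum]
  exact sum_congr rfl fun i _ => by ring

theorem pow_mul_Egen :
    y ^ p ^ e * Egen p e a y =
      (y * Rgen p e a y) ^ p ^ e + ∑ i ∈ range (e + 1), (a i * y ^ p ^ i * y) ^ p ^ (e - i) := by
  rw [Egen, mul_add, ← mul_pow, mul_sum]
  congr 1
  refine sum_congr rfl fun i hi => ?_
  have hie : i ≤ e := Nat.lt_succ_iff.mp (mem_range.mp hi)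
  rw [← Nat.add_sub_cancel' hie, pow_add, pow_mul, Nat.add_sub_cancel_left, ← mul_pow]
  ring

end Additive

namespace FiniteField

variable {K L : Type*} [Field K] [Fintype K] [Field L] [Algebra K L] [Algebra.IsAlgebraic K L]

theorem trace_pow_card_pow (x : L) (k : ℕ) :
    Algebra.trace K L (x ^ Fintype.card K ^ k) = Algebra.trace K L x := by
  have h := Algebra.trace_eq_of_algEquiv (frobeniusAlgEquivOfAlgebraic K L ^ k) x
  rwa [AlgEquiv.coe_pow, coe_frobeniusAlgEquivOfAlgebraic_iterate] at h

theorem trace_pow_mul_Egen (e : ℕ) (a : ℕ → L) (y : L) :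
    Algebra.trace K L (y ^ Fintype.card K ^ e * Egen (Fintype.card K) e a y) =
      2 * Algebra.trace K L (y * Rgen (Fintype.card K) e a y) := by
  simp only [pow_mul_Egen, map_add, map_sum, trace_pow_card_pow]
  rw [← map_sum, ← mul_Rgen, two_mul]

end FiniteField

theorem statement13_general {Fp F : Type*} [Field Fp] [Fintype Fp] [Field F] [Fintype F] [Algebra Fp F]
    (p₀ p e : ℕ) (hodd : Odd p₀) [CharP F p₀]
    (hcardp : Fintype.card Fp = p)
    (a : ℕ → F)
    (y : F) (hy : Egen p e a y = 0) :
    Algebra.trace Fp F (y * Rgen p e a y) = 0 := by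
  subst hcardp
  have h := FiniteField.trace_pow_mul_Egen (K := Fp) e a y
  rw [hy, mul_zero, map_zero] at h
  have : CharP Fp p₀ := (Algebra.charP_iff Fp F p₀).mpr ‹_›
  have htwo : (2 : Fp) ≠ 0 :=
    Ring.two_ne_zero <| by rw [ringChar.eq Fp p₀]; exact hodd.ne_two_of_dvd_nat dvd_rfl
  exact (mul_eq_zero.mp h.symm).resolve_left htwo

/-- for `p` odd, if `y ∈ F_q` satisfies `E_R(y) = 0` then
`Tr_{F_q/F_p}(y·R(y)) = 0`. -/
theorem statement13 {Fp F : Type*} [Field Fp] [Fintype Fp] [Field F] [Fintype F] [Algebra Fp F]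
    (p₀ n p s q e : ℕ) (hp₀ : p₀.Prime) (hodd : Odd p₀) [CharP F p₀]
    (hn : 0 < n) (hpn : p = p₀ ^ n) (hs : 0 < s) (hq : q = p ^ s)
    (hcardp : Fintype.card Fp = p) (hcard : Fintype.card F = q)
    (a : ℕ → F) (hae : a e ≠ 0)
    (y : F) (hy : Egen p e a y = 0) :
    Algebra.trace Fp F (y * Rgen p e a y) = 0 :=
  statement13_general p₀ p e hodd hcardp a y hy
end
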